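/- arXiv:2206.12600 — 5 statements merged into one kernel-verified Lean document; each statement's English description precedes it below -/
import Mathlib

section
/- Let T be a string of length n, and define SA_pal, L_pal and LF_pal as below. For all positions 1 ≤ i < j ≤ n+1, if L_pal[i] = L_pal[j] and neither equals the special symbol $, then LF_pal(i) < LF_pal(j). -/
open scoped ENat

variable {α : Type*}

/-- `w` is a palindrome. -/
def IsPal (w : List α) : Prop := w.reverse = w

/-- The substring `w[i..j]`, 1-indexed, inclusive; empty if `i > j`. -/
def sub (w : List α) (i j : ℕ) : List α := (w.take j).drop (i - 1)

/-- Two strings of the same length pal-match: they agree on which substrings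
`w[i..j]` (for `1 ≤ i < j ≤ |w|`) are palindromes. -/
def PalMatch (x y : List α) : Prop :=
  x.length = y.length ∧
    ∀ i j, 1 ≤ i → i < j → j ≤ x.length → (IsPal (sub x i j) ↔ IsPal (sub y i j))

/-- `sspAt w i` : length of the shortest palindromic suffix of `w[1..i]`
of length at least 2, or `∞` if none exists. -/
noncomputable def sspAt (w : List α) (i : ℕ) : ℕ∞ :=
  sInf {ℓ : ℕ∞ | ∃ u : List α, u <:+ w.take i ∧ IsPal u ∧ 2 ≤ u.length ∧ (u.length : ℕ∞) = ℓ}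

/-- The ssp-encoding of `w` as a sequence of length `|w|` over `ℕ ∪ {∞}`. -/
noncomputable def ssp (w : List α) : List ℕ∞ :=
  (List.range w.length).map fun k => sspAt w (k + 1)

/-- The palindromic proper suffixes of `w` (including the empty suffix). -/
def palSufs (w : List α) : Set (List α) :=
  {u | u <:+ w ∧ IsPal u ∧ u.length < w.length}

/-- The suffix-pal-groups of `w`, identified with the character `w[|w|-|u|]`
immediately to the left of their members. -/
def palSufGroups (w : List α) : Set (Option α) :=
  {c | ∃ u ∈ palSufs w, w[w.length - u.length - 1]? = c}

/-- Length of the representative (shortest member) of the suffix-pal-group of `w`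
whose members have the character `c` immediately to their left. -/
noncomputable def repLen (w : List α) (c : Option α) : ℕ :=
  sInf {ℓ : ℕ | ∃ u ∈ palSufs w, w[w.length - u.length - 1]? = c ∧ u.length = ℓ}

/-- The 1-based identifier of the suffix-pal-group of `w` with left character `c`:
identifiers are assigned in increasing order of the representatives' lengths. -/
noncomputable def groupIdOf (w : List α) (c : Option α) : ℕ :=
  Set.ncard {c' | c' ∈ palSufGroups w ∧ repLen w c' ≤ repLen w c}

/-- `sspgAt w i` : `∞` if `sspAt w i = ∞`, and otherwise the identifier of the
suffix-pal-group of `w[1..i-1]` containing the palindromic suffix of `w[1..i-1]`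
of length `sspAt w i - 2`. -/
noncomputable def sspgAt (w : List α) (i : ℕ) : ℕ∞ :=
  if sspAt w i = ⊤ then ⊤
  else (groupIdOf (w.take (i - 1))
        ((w.take (i - 1))[(i - 1) - ((sspAt w i).toNat - 2) - 1]?) : ℕ∞)

/-- `π(w) = sspg_{reverse w}[|w|]`. -/
noncomputable def piEnc (w : List α) : ℕ∞ := sspgAt w.reverse w.length

/-!
Rows `i < j` hold suffixes `x`, `y` with `ssp x ≺ ssp y`, and rows `LF i`, `LF j` hold `a :: x`,
`b :: y`; equal `L_pal` means `π(a :: x) = π(b :: y)`. So it suffices that prepending letters of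
equal `π` preserves `≺`. Let `ssp x` and `ssp y` agree on their first `k` entries. The ssp values of a
prefix determine all its palindromic windows: a palindromic suffix longer than the shortest one,
with the shortest one mirrored to its front, is pinned down by shorter palindromes. So `x` and `y`
pal-match up to `k`. The value `π(a :: x)` is the rank, by shortest member, of the group of
palindromic prefixes of `x` followed by `a`; ranks inside the pal-matching part agree, so the
palindromic prefixes of `x` followed by `a` and those of `y` followed by `b` coincide below `k`.
Prepending `c` to `w` changes `ssp` at position `l + 2` only by the candidate `l + 2`, present iff
`w[1..l]` is a palindrome followed by `c`; hence `ssp (a :: x)` and `ssp (b :: y)` agree on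
`k + 1` entries and then differ in the same direction.
-/

/-- The window `w[i], …, w[i+n-1]` is a palindrome, stated letterwise so that it needs no
bound on `i + n`. -/
def IsPalWindow (w : List α) (i n : ℕ) : Prop :=
  ∀ a b, i ≤ a → i ≤ b → a + b + 1 = 2 * i + n → w[a]? = w[b]?

section PalWindow

variable {w : List α} {i n : ℕ}

lemma isPalWindow_of_le_one (h : n ≤ 1) : IsPalWindow w i n := by
  intro a b _ _ hab
  obtain rfl : a = b := by omega
  rfl

lemma isPalWindow_add_two_iff :
    IsPalWindow w i (n + 2) ↔ w[i]? = w[i + n + 1]? ∧ IsPalWindow w (i + 1) n := by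
  constructor
  · intro h
    exact ⟨h _ _ le_rfl (by omega) (by omega),
      fun a b _ _ _ => h a b (by omega) (by omega) (by omega)⟩
  · rintro ⟨hend, hin⟩ a b ha hb hab
    by_cases hai : a = i
    · rwa [hai, show b = i + n + 1 by omega]
    by_cases hbi : b = i
    · rw [hbi, show a = i + n + 1 by omega]
      exact hend.symm
    exact hin a b (by omega) (by omega) (by omega)

lemma IsPalWindow.mirror {s t : ℕ} (h : IsPalWindow w i n) (hs : IsPalWindow w s t)
    (his : i ≤ s) (hst : s + t ≤ i + n) : IsPalWindow w (2 * i + n - s - t) t := by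
  intro a b ha hb hab
  calc w[a]? = w[2 * i + n - 1 - a]? := h _ _ (by omega) (by omega) (by omega)
    _ = w[2 * i + n - 1 - b]? := hs _ _ (by omega) (by omega) (by omega)
    _ = w[b]? := h _ _ (by omega) (by omega) (by omega)

lemma isPalWindow_cons_succ {c : α} : IsPalWindow (c :: w) (i + 1) n ↔ IsPalWindow w i n := by
  constructor
  · intro h a b ha hb hab
    simpa using h (a + 1) (b + 1) (by omega) (by omega) (by omega)
  · intro h a b ha hb hab
    obtain ⟨a, rfl⟩ : ∃ a', a = a' + 1 := ⟨a - 1, by omega⟩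
    obtain ⟨b, rfl⟩ : ∃ b', b = b' + 1 := ⟨b - 1, by omega⟩
    simpa using h a b (by omega) (by omega) (by omega)

/-- The mirror image of the shorter prefix inside the longer one is preceded by the mirror
of `w[l]`. -/
lemma getElem?_eq_iff_isPalWindow {l l' : ℕ} (hll' : l < l') (h : IsPalWindow w 0 l)
    (h' : IsPalWindow w 0 l') : w[l]? = w[l']? ↔ IsPalWindow w (l' - l - 1) (l + 2) := by
  have hmirror : IsPalWindow w (l' - l) l := by
    simpa using h'.mirror h le_rfl (by omega)
  rw [isPalWindow_add_two_iff, show l' - l - 1 + l + 1 = l' by omega,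
    show l' - l - 1 + 1 = l' - l by omega, h' (l' - l - 1) l (by omega) (by omega) (by omega)]
  exact (and_iff_left hmirror).symm

lemma isPal_take_drop_iff (h : i + n ≤ w.length) :
    IsPal ((w.drop i).take n) ↔ IsPalWindow w i n := by
  set u := (w.drop i).take n
  have hu : u.length = n := List.length_take_of_le (by rw [List.length_drop]; omega)
  have hget : ∀ t < n, u[t]? = w[i + t]? := fun t ht => by
    simp [u, List.getElem?_take_of_lt ht]
  rw [IsPal, List.ext_getElem?_iff]
  constructor
  · intro hp a b ha hb hab
    have := hp (b - i)
    rw [List.getElem?_reverse (by omega), hu, hget _ (by omega), hget _ (by omega),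
      show i + (n - 1 - (b - i)) = a by omega, show i + (b - i) = b by omega] at this
    exact this
  · intro hp t
    rcases lt_or_ge t n with ht | ht
    · rw [List.getElem?_reverse (by omega), hu, hget _ (by omega), hget _ ht]
      exact hp _ _ (by omega) (by omega) (by omega)
    · rw [List.getElem?_eq_none (by rw [List.length_reverse]; omega), List.getElem?_eq_none (by omega)]

lemma IsPal.suffix_reverse_iff {u : List α} (hu : IsPal u) : u <:+ w.reverse ↔ u <+: w := by
  conv_lhs => rw [← hu]
  exact List.reverse_suffix

lemma List.IsPrefix.isPal_iff {u : List α} (h : u <+: w) :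
    IsPal u ↔ IsPalWindow w 0 u.length := by
  conv_lhs => rw [List.prefix_iff_eq_take.mp h]
  exact isPal_take_drop_iff (i := 0) (by simpa using h.length_le)

lemma exists_suffix_take_isPal_iff {j m : ℕ} (hj : j ≤ w.length) :
    (∃ u, u <:+ w.take j ∧ IsPal u ∧ u.length = m) ↔ m ≤ j ∧ IsPalWindow w (j - m) m := by
  constructor
  · rintro ⟨u, hu, hpal, rfl⟩
    have hlen : u.length ≤ j := by simpa [hj] using hu.length_le
    rw [List.suffix_iff_eq_drop, List.length_take, min_eq_left hj, List.drop_take,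
      Nat.sub_sub_self hlen] at hu
    exact ⟨hlen, (isPal_take_drop_iff (by omega)).mp (hu ▸ hpal)⟩
  · rintro ⟨hm, hpal⟩
    refine ⟨(w.drop (j - m)).take m, ?_, (isPal_take_drop_iff (by omega)).mpr hpal,
      List.length_take_of_le (by rw [List.length_drop]; omega)⟩
    have := List.drop_suffix (j - m) (w.take j)
    rwa [List.drop_take, Nat.sub_sub_self hm] at this

end PalWindow

section Ssp

variable {w : List α} {j m : ℕ}

lemma sspAt_le (hj : j ≤ w.length) (h2 : 2 ≤ m) (hm : m ≤ j) (h : IsPalWindow w (j - m) m) :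
    sspAt w j ≤ m := by
  obtain ⟨u, hu, hpal, rfl⟩ := (exists_suffix_take_isPal_iff hj).mpr ⟨hm, h⟩
  exact sInf_le ⟨u, hu, hpal, h2, rfl⟩

lemma exists_sspAt_eq (hj : j ≤ w.length) (h : sspAt w j ≠ ⊤) :
    ∃ ℓ : ℕ, sspAt w j = ℓ ∧ 2 ≤ ℓ ∧ ℓ ≤ j ∧ IsPalWindow w (j - ℓ) ℓ := by
  have hne : {ℓ : ℕ∞ | ∃ u : List α, u <:+ w.take j ∧ IsPal u ∧ 2 ≤ u.length ∧
      (u.length : ℕ∞) = ℓ}.Nonempty :=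
    Set.nonempty_iff_ne_empty.mpr fun he => h (by rw [sspAt, he, sInf_empty])
  obtain ⟨u, hu, hpal, h2, hℓ⟩ := csInf_mem hne
  obtain ⟨hm, hwin⟩ := (exists_suffix_take_isPal_iff hj).mp ⟨u, hu, hpal, rfl⟩
  exact ⟨u.length, hℓ.symm, h2, hm, hwin⟩

lemma sspAt_one (w : List α) : sspAt w 1 = ⊤ := by
  rw [sspAt, sInf_eq_top]
  rintro _ ⟨u, hu, -, h2, -⟩
  have := hu.length_le.trans (List.length_take_le 1 w)
  omega

end Ssp

/-- `x.take k` and `y.take k` pal-match (cf. `PalMatch`), phrased with 0-indexed windows. -/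
def PalAgree (x y : List α) (k : ℕ) : Prop :=
  ∀ i n, i + n ≤ k → (IsPalWindow x i n ↔ IsPalWindow y i n)

lemma PalAgree.symm {x y : List α} {k : ℕ} (h : PalAgree x y k) : PalAgree y x k :=
  fun i n hin => (h i n hin).symm

section SspDeterminesPalindromes

variable {x y : List α} {k : ℕ}

lemma isPalWindow_of_sspAt_eq (hx : k ≤ x.length) (hy : k ≤ y.length)
    (h : ∀ j < k, sspAt x (j + 1) = sspAt y (j + 1)) :
    ∀ n i, i + n ≤ k → IsPalWindow x i n → IsPalWindow y i n := by
  intro n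
  induction n using Nat.strong_induction_on with
  | _ n ih =>
  intro i hik hwin
  rcases lt_or_ge n 2 with hn | hn
  · exact isPalWindow_of_le_one (by omega)
  have hsame : sspAt x (i + n) = sspAt y (i + n) := by
    simpa [show i + n - 1 + 1 = i + n by omega] using h (i + n - 1) (by omega)
  have hle : sspAt x (i + n) ≤ n := sspAt_le (by omega) hn (by omega) (by simpa using hwin)
  obtain ⟨ℓ, hℓ, hℓ2, -, hxℓ⟩ := exists_sspAt_eq (by omega) (ne_top_of_le_ne_top (by simp) hle)
  obtain ⟨ℓ', hℓ', -, -, hyℓ⟩ :=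
    exists_sspAt_eq (w := y) (j := i + n) (by omega) (by simp [← hsame, hℓ])
  obtain rfl : ℓ = ℓ' := by exact_mod_cast hℓ.symm.trans (hsame.trans hℓ')
  rw [hℓ, Nat.cast_le] at hle
  rcases eq_or_lt_of_le hle with rfl | hℓn
  · simpa using hyℓ
  -- Mirror the shortest palindromic suffix to a prefix and strip the window's end letters:
  -- both are shorter windows, so they transfer to `y`, where they force the end letters equal.
  have hxpre : IsPalWindow x i ℓ := by
    have := hwin.mirror hxℓ (by omega) (by omega)
    rwa [show 2 * i + n - (i + n - ℓ) - ℓ = i by omega] at this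
  have hypre : IsPalWindow y i ℓ := ih ℓ hℓn i (by omega) hxpre
  rw [show n = n - 2 + 2 by omega, isPalWindow_add_two_iff] at hwin ⊢
  have hyin : IsPalWindow y (i + 1) (n - 2) := ih (n - 2) (by omega) (i + 1) (by omega) hwin.2
  refine ⟨?_, hyin⟩
  calc y[i]? = y[i + ℓ - 1]? := hypre _ _ le_rfl (by omega) (by omega)
    _ = y[i + n - ℓ]? := hyin _ _ (by omega) (by omega) (by omega)
    _ = y[i + (n - 2) + 1]? := hyℓ _ _ (by omega) (by omega) (by omega)

lemma palAgree_of_sspAt_eq (hx : k ≤ x.length) (hy : k ≤ y.length)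
    (h : ∀ j < k, sspAt x (j + 1) = sspAt y (j + 1)) : PalAgree x y k :=
  fun i n hin => ⟨isPalWindow_of_sspAt_eq hx hy h n i hin,
    isPalWindow_of_sspAt_eq hy hx (fun j hj => (h j hj).symm) n i hin⟩

end SspDeterminesPalindromes

/-- Read on `w.reverse`, these are the lengths of the members of the suffix-pal-group with left
letter `c`. -/
def palPrefixGroup (w : List α) (c : Option α) : Set ℕ :=
  {l | l < w.length ∧ IsPalWindow w 0 l ∧ w[l]? = c}

/-- Counts the groups whose shortest member has length at most `r`. -/
noncomputable def palPrefixRepCount (w : List α) (r : ℕ) : ℕ :=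
  {m | m ≤ r ∧ IsLeast (palPrefixGroup w w[m]?) m}.ncard

section PalPrefixGroup

variable {w : List α} {c : α} {l : ℕ}

lemma isPalWindow_cons_iff_mem_palPrefixGroup :
    IsPalWindow (c :: w) 0 (l + 2) ↔ l ∈ palPrefixGroup w (some c) := by
  rw [isPalWindow_add_two_iff, isPalWindow_cons_succ]
  constructor
  · rintro ⟨hc, hpal⟩
    have hc : w[l]? = some c := by simpa using hc.symm
    exact ⟨(List.getElem?_eq_some_iff.mp hc).1, hpal, hc⟩
  · rintro ⟨-, hpal, hc⟩
    exact ⟨by simpa using hc.symm, hpal⟩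

open Classical in
lemma sspAt_cons_add_two (hl : l < w.length) :
    sspAt (c :: w) (l + 2) =
      sspAt w (l + 1) ⊓ if l ∈ palPrefixGroup w (some c) then ((l + 2 : ℕ) : ℕ∞) else ⊤ := by
  have hlen : (c :: w.take (l + 1)).length = l + 2 := by
    rw [List.length_cons, List.length_take_of_le (by omega)]
  have hwhole : IsPal (c :: w.take (l + 1)) ↔ l ∈ palPrefixGroup w (some c) := by
    rw [← List.take_succ_cons, (List.take_prefix (l + 2) (c :: w)).isPal_iff, List.take_succ_cons,
      hlen, isPalWindow_cons_iff_mem_palPrefixGroup]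
  have hsets : {ℓ : ℕ∞ | ∃ u : List α, u <:+ (c :: w).take (l + 2) ∧ IsPal u ∧ 2 ≤ u.length ∧
      (u.length : ℕ∞) = ℓ} = {ℓ : ℕ∞ | ∃ u : List α, u <:+ w.take (l + 1) ∧ IsPal u ∧
      2 ≤ u.length ∧ (u.length : ℕ∞) = ℓ} ∪ {ℓ | l ∈ palPrefixGroup w (some c) ∧ ℓ = l + 2} := by
    ext ℓ
    simp only [List.take_succ_cons, List.suffix_cons_iff, Set.mem_union, Set.mem_ofPred_eq]
    constructor
    · rintro ⟨u, rfl | hu, hpal, h2, rfl⟩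
      · exact Or.inr ⟨hwhole.mp hpal, by rw [hlen]; push_cast; rfl⟩
      · exact Or.inl ⟨u, hu, hpal, h2, rfl⟩
    · rintro (⟨u, hu, hpal, h2, rfl⟩ | ⟨hmem, rfl⟩)
      · exact ⟨u, Or.inr hu, hpal, h2, rfl⟩
      · exact ⟨_, Or.inl rfl, hwhole.mpr hmem, by omega, by rw [hlen]; push_cast; rfl⟩
  rw [sspAt, hsets, sInf_union, ← sspAt]
  split_ifs with hmem <;> simp [hmem]

open Classical in
lemma sspAt_reverse_cons (a : α) (x : List α) :
    sspAt (a :: x).reverse (x.length + 1) =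
      if (palPrefixGroup x (some a)).Nonempty then
        ((sInf (palPrefixGroup x (some a)) + 2 : ℕ) : ℕ∞) else ⊤ := by
  have hsets : {ℓ : ℕ∞ | ∃ u : List α, u <:+ (a :: x).reverse.take (x.length + 1) ∧ IsPal u ∧
      2 ≤ u.length ∧ (u.length : ℕ∞) = ℓ} =
      (fun l : ℕ => ((l + 2 : ℕ) : ℕ∞)) '' palPrefixGroup x (some a) := by
    rw [List.take_of_length_le (by simp)]
    ext ℓ
    constructor
    · rintro ⟨u, hu, hpal, h2, rfl⟩
      rw [hpal.suffix_reverse_iff] at hu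
      obtain ⟨l, hl⟩ : ∃ l, u.length = l + 2 := ⟨u.length - 2, by omega⟩
      refine ⟨l, ?_, by simp [hl]⟩
      rw [← isPalWindow_cons_iff_mem_palPrefixGroup, ← hl, ← hu.isPal_iff]
      exact hpal
    · rintro ⟨l, hl, rfl⟩
      have hlen : ((a :: x).take (l + 2)).length = l + 2 :=
        List.length_take_of_le (by rw [List.length_cons]; exact Nat.succ_le_succ hl.1)
      have hpal : IsPal ((a :: x).take (l + 2)) := by
        rw [(List.take_prefix _ _).isPal_iff, hlen, isPalWindow_cons_iff_mem_palPrefixGroup]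
        exact hl
      exact ⟨_, hpal.suffix_reverse_iff.mpr (List.take_prefix _ _), hpal, by omega, by rw [hlen]⟩
  rw [sspAt, hsets]
  split_ifs with hne
  · refine le_antisymm (sInf_le ⟨_, Nat.sInf_mem hne, rfl⟩) (le_sInf ?_)
    rintro _ ⟨l, hl, rfl⟩
    exact Nat.cast_le.mpr (Nat.add_le_add_right (Nat.sInf_le hl) 2)
  · rw [Set.not_nonempty_iff_eq_empty.mp hne, Set.image_empty, sInf_empty]

end PalPrefixGroup

lemma palSufs_reverse_lengths (x : List α) (c : Option α) :
    {ℓ | ∃ u ∈ palSufs x.reverse, x.reverse[x.reverse.length - u.length - 1]? = c ∧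
      u.length = ℓ} = palPrefixGroup x c := by
  ext l
  constructor
  · rintro ⟨u, ⟨hu, hpal, hlt⟩, hc, rfl⟩
    rw [hpal.suffix_reverse_iff] at hu
    rw [List.length_reverse] at hlt hc
    rw [List.getElem?_reverse (by omega), show x.length - 1 - (x.length - u.length - 1) =
      u.length by omega] at hc
    exact ⟨hlt, hu.isPal_iff.mp hpal, hc⟩
  · rintro ⟨hl, hpal, hc⟩
    have hlen : (x.take l).length = l := List.length_take_of_le hl.le
    have hpal' : IsPal (x.take l) := by rwa [(List.take_prefix l x).isPal_iff, hlen]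
    refine ⟨x.take l, ⟨hpal'.suffix_reverse_iff.mpr (List.take_prefix l x), hpal', ?_⟩, ?_, hlen⟩
    · simpa [hlen] using hl
    · rw [hlen, List.length_reverse, List.getElem?_reverse (by omega),
        show x.length - 1 - (x.length - l - 1) = l by omega, hc]

lemma groupIdOf_reverse (x : List α) (c : Option α) :
    groupIdOf x.reverse c = palPrefixRepCount x (sInf (palPrefixGroup x c)) := by
  have hrepLen : ∀ c', repLen x.reverse c' = sInf (palPrefixGroup x c') := fun c' => by
    rw [repLen, palSufs_reverse_lengths]
  have hgroups : palSufGroups x.reverse = {c' | (palPrefixGroup x c').Nonempty} := by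
    ext c'
    change (∃ u ∈ _, _) ↔ (palPrefixGroup x c').Nonempty
    rw [← palSufs_reverse_lengths]
    exact ⟨fun ⟨u, hu, hc⟩ => ⟨_, u, hu, hc, rfl⟩, fun ⟨_, u, hu, hc, _⟩ => ⟨u, hu, hc⟩⟩
  -- a nonempty group is determined by its representative `m`: it is the group of `x[m]?`
  have hletter : ∀ {c'}, (palPrefixGroup x c').Nonempty → x[sInf (palPrefixGroup x c')]? = c' :=
    fun h => (Nat.sInf_mem h).2.2
  set r := sInf (palPrefixGroup x c)
  set S := {c' | (palPrefixGroup x c').Nonempty ∧ sInf (palPrefixGroup x c') ≤ r}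
  have hinj : Set.InjOn (fun c' => sInf (palPrefixGroup x c')) S :=
    fun c₁ h₁ c₂ h₂ he => by rw [← hletter h₁.1, ← hletter h₂.1]; exact congrArg _ he
  have himage : (fun c' => sInf (palPrefixGroup x c')) '' S =
      {m | m ≤ r ∧ IsLeast (palPrefixGroup x x[m]?) m} := by
    ext m
    constructor
    · rintro ⟨c', ⟨hne, hle⟩, rfl⟩
      exact ⟨hle, by rw [hletter hne]; exact isLeast_csInf hne⟩
    · rintro ⟨hle, hm⟩
      exact ⟨x[m]?, ⟨⟨m, hm.1⟩, by rwa [hm.csInf_eq]⟩, hm.csInf_eq⟩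
  rw [groupIdOf, hgroups]
  simp_rw [hrepLen]
  rw [palPrefixRepCount, ← himage, hinj.ncard_image]
  rfl

open Classical in
lemma piEnc_cons (a : α) (x : List α) :
    piEnc (a :: x) = if (palPrefixGroup x (some a)).Nonempty then
      (palPrefixRepCount x (sInf (palPrefixGroup x (some a))) : ℕ∞) else ⊤ := by
  rw [piEnc, sspgAt, List.length_cons, sspAt_reverse_cons]
  by_cases hne : (palPrefixGroup x (some a)).Nonempty
  · set r := sInf (palPrefixGroup x (some a))
    obtain ⟨hr, -, hra⟩ : r ∈ palPrefixGroup x (some a) := Nat.sInf_mem hne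
    have htake : (a :: x).reverse.take (x.length + 1 - 1) = x.reverse := by simp
    have hletter : x.reverse[x.length + 1 - 1 - (r + 2 - 2) - 1]? = some a := by
      rw [List.getElem?_reverse (by omega),
        show x.length - 1 - (x.length + 1 - 1 - (r + 2 - 2) - 1) = r by omega, hra]
    rw [if_pos hne, if_neg (ENat.natCast_ne_top _), if_pos hne, ENat.toNat_natCast, htake, hletter,
      groupIdOf_reverse]
  · rw [if_neg hne, if_pos rfl, if_neg hne]

section RepCount

variable {x y : List α} {k : ℕ}

lemma palPrefixRepCount_lt_of_isLeast {r r' : ℕ} (h : r < r')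
    (hr' : IsLeast (palPrefixGroup x x[r']?) r') :
    palPrefixRepCount x r < palPrefixRepCount x r' := by
  refine Set.ncard_lt_ncard ⟨fun m hm => ⟨hm.1.trans h.le, hm.2⟩, fun hsub => ?_⟩
    ((Set.finite_le_nat r').subset fun m hm => hm.1)
  have := (hsub ⟨le_rfl, hr'⟩).1
  omega

lemma PalAgree.isLeast_palPrefixGroup (hxy : PalAgree x y k) (hy : k ≤ y.length) {m : ℕ}
    (hm : m < k) (h : IsLeast (palPrefixGroup x x[m]?) m) :
    IsLeast (palPrefixGroup y y[m]?) m := by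
  obtain ⟨⟨hmx, hxm, -⟩, hleast⟩ := h
  have hym : IsPalWindow y 0 m := (hxy 0 m (by omega)).mp hxm
  refine ⟨⟨by omega, hym, rfl⟩, fun m' ⟨_, hym', hc⟩ => le_of_not_gt fun hm' => ?_⟩
  have hxm' : IsPalWindow x 0 m' := (hxy 0 m' (by omega)).mpr hym'
  rw [getElem?_eq_iff_isPalWindow hm' hym' hym, ← hxy _ _ (by omega),
    ← getElem?_eq_iff_isPalWindow hm' hxm' hxm] at hc
  exact absurd (hleast ⟨by omega, hxm', hc⟩) (by omega)

lemma PalAgree.palPrefixRepCount_eq (hxy : PalAgree x y k) (hx : k ≤ x.length)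
    (hy : k ≤ y.length) {r : ℕ} (hr : r < k) :
    palPrefixRepCount x r = palPrefixRepCount y r := by
  rw [palPrefixRepCount, palPrefixRepCount]
  congr 1
  ext m
  exact and_congr_right fun hm => ⟨hxy.isLeast_palPrefixGroup hy (by omega),
    hxy.symm.isLeast_palPrefixGroup hx (by omega)⟩

lemma PalAgree.eq_of_palPrefixRepCount_eq (hxy : PalAgree x y k) (hx : k ≤ x.length)
    (hy : k ≤ y.length) {r s : ℕ} (hrk : r < k) (hr : IsLeast (palPrefixGroup x x[r]?) r)
    (hs : IsLeast (palPrefixGroup y y[s]?) s)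
    (h : palPrefixRepCount x r = palPrefixRepCount y s) : s = r := by
  rcases lt_trichotomy s r with hsr | rfl | hrs
  · have := palPrefixRepCount_lt_of_isLeast hsr hr
    rw [h, ← hxy.palPrefixRepCount_eq hx hy (hsr.trans hrk)] at this
    exact absurd this (lt_irrefl _)
  · rfl
  · have := palPrefixRepCount_lt_of_isLeast hrs hs
    rw [← h, hxy.palPrefixRepCount_eq hx hy hrk] at this
    exact absurd this (lt_irrefl _)

/-- `π` is the rank of a group, and ranks below `k` are computed alike in `x` and `y`; so both
groups have the same shortest member `r`, and membership of `l > r` is the window test at `r`. -/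
lemma PalAgree.mem_palPrefixGroup_of_piEnc_eq (hxy : PalAgree x y k) (hx : k ≤ x.length)
    (hy : k ≤ y.length) {a b : α} (hπ : piEnc (a :: x) = piEnc (b :: y)) {l : ℕ} (hl : l < k)
    (hla : l ∈ palPrefixGroup x (some a)) : l ∈ palPrefixGroup y (some b) := by
  have hGa : (palPrefixGroup x (some a)).Nonempty := ⟨l, hla⟩
  have hGb : (palPrefixGroup y (some b)).Nonempty := by
    by_contra hGb
    rw [piEnc_cons, piEnc_cons, if_pos hGa, if_neg hGb] at hπ
    exact ENat.natCast_ne_top _ hπ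
  rw [piEnc_cons, piEnc_cons, if_pos hGa, if_pos hGb, Nat.cast_inj] at hπ
  set r := sInf (palPrefixGroup x (some a))
  have hr : IsLeast (palPrefixGroup x (some a)) r := isLeast_csInf hGa
  set s := sInf (palPrefixGroup y (some b))
  have hs : IsLeast (palPrefixGroup y (some b)) s := isLeast_csInf hGb
  have hrl : r ≤ l := hr.2 hla
  obtain ⟨-, hxr, hxra⟩ := hr.1
  obtain ⟨-, hys, hysb⟩ := hs.1
  rw [← hxra] at hr
  rw [← hysb] at hs
  have hsr := hxy.eq_of_palPrefixRepCount_eq hx hy (by omega) hr hs hπ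
  rw [hsr] at hys hysb
  obtain ⟨-, hxl, hxla⟩ := hla
  have hyl : IsPalWindow y 0 l := (hxy 0 l (by omega)).mp hxl
  refine ⟨by omega, hyl, ?_⟩
  rcases eq_or_lt_of_le hrl with rfl | hrl
  · exact hysb
  rw [← hysb, eq_comm, getElem?_eq_iff_isPalWindow hrl hys hyl, ← hxy _ _ (by omega),
    ← getElem?_eq_iff_isPalWindow hrl hxr hxl, hxra, hxla]

end RepCount

theorem List.map_range_lt_map_range_iff {β : Type*} [LT β] {f g : ℕ → β} {m n : ℕ} :
    List.Lex (· < ·) ((List.range m).map f) ((List.range n).map g) ↔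
      ∃ k, (∀ j < k, f j = g j) ∧ (k = m ∧ m < n ∨ k < m ∧ k < n ∧ f k < g k) := by
  rw [List.lex_lt, List.lt_iff_exists]
  simp only [List.length_map, List.length_range, List.getElem_map, List.getElem_range,
    ← List.map_take, List.take_range]
  constructor
  · rintro (⟨h, hmn⟩ | ⟨k, hkm, hkn, hj, hk⟩)
    · rw [min_eq_left hmn.le, List.map_inj_left] at h
      exact ⟨m, fun j hj => h j (List.mem_range.mpr hj), Or.inl ⟨rfl, hmn⟩⟩
    · exact ⟨k, fun j hjk => hj j hjk, Or.inr ⟨hkm, hkn, hk⟩⟩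
  · rintro ⟨k, hj, ⟨rfl, hmn⟩ | ⟨hkm, hkn, hk⟩⟩
    · rw [min_eq_left hmn.le, List.map_inj_left]
      exact Or.inl ⟨fun j hj' => hj j (List.mem_range.mp hj'), hmn⟩
    · exact Or.inr ⟨k, hkm, hkn, fun j hjk => hj j hjk, hk⟩

lemma ssp_cons_lt_ssp_cons {x y : List α} {a b : α} (hπ : piEnc (a :: x) = piEnc (b :: y))
    (h : List.Lex (· < ·) (ssp x) (ssp y)) :
    List.Lex (· < ·) (ssp (a :: x)) (ssp (b :: y)) := by
  rw [ssp, ssp, List.map_range_lt_map_range_iff] at h ⊢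
  obtain ⟨k, hagree, hcase⟩ := h
  have hx : k ≤ x.length := by omega
  have hy : k ≤ y.length := by omega
  have hxy : PalAgree x y k := palAgree_of_sspAt_eq hx hy hagree
  have hgroups : ∀ l < k, l ∈ palPrefixGroup x (some a) ↔ l ∈ palPrefixGroup y (some b) :=
    fun l hl => ⟨hxy.mem_palPrefixGroup_of_piEnc_eq hx hy hπ hl,
      hxy.symm.mem_palPrefixGroup_of_piEnc_eq hy hx hπ.symm hl⟩
  refine ⟨k + 1, fun j hj => ?_, ?_⟩
  · rcases j with _ | l
    · rw [sspAt_one, sspAt_one]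
    · rw [sspAt_cons_add_two (by omega), sspAt_cons_add_two (by omega), hagree l (by omega)]
      by_cases hl : l ∈ palPrefixGroup x (some a)
      · rw [if_pos hl, if_pos ((hgroups l (by omega)).mp hl)]
      · rw [if_neg hl, if_neg (mt (hgroups l (by omega)).mpr hl)]
  simp only [List.length_cons]
  rcases hcase with ⟨rfl, hk⟩ | ⟨hkx, hky, hlt⟩
  · exact Or.inl ⟨rfl, by omega⟩
  refine Or.inr ⟨by omega, by omega, ?_⟩
  obtain ⟨ℓ, hℓ, -, hℓk, -⟩ := exists_sspAt_eq hkx (ne_top_of_lt hlt)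
  calc sspAt (a :: x) (k + 2) ≤ sspAt x (k + 1) := by
        rw [sspAt_cons_add_two hkx]; exact inf_le_left
    _ < sspAt y (k + 1) ⊓ ((k + 2 : ℕ) : ℕ∞) :=
        lt_inf_iff.mpr ⟨hlt, by rw [hℓ]; exact_mod_cast Nat.lt_succ_of_le hℓk⟩
    _ ≤ sspAt (b :: y) (k + 2) := by
        rw [sspAt_cons_add_two hky]
        split_ifs
        · exact le_rfl
        · exact inf_le_inf_left _ le_top

lemma ssp_drop_lt_ssp_drop {T : List α} {p q : ℕ} (hp : p < T.length) (hq : q < T.length)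
    (hπ : piEnc (T.drop p) = piEnc (T.drop q))
    (h : List.Lex (· < ·) (ssp (T.drop (p + 1))) (ssp (T.drop (q + 1)))) :
    List.Lex (· < ·) (ssp (T.drop p)) (ssp (T.drop q)) := by
  rw [List.drop_eq_getElem_cons hp, List.drop_eq_getElem_cons hq] at hπ ⊢
  exact ssp_cons_lt_ssp_cons hπ h

/-- `L i = none` plays the role of the special symbol `$`. -/
theorem stmt9_general {α : Type*} (T : List α) (n : ℕ) (hT : T.length = n)
    (SA LF : ℕ → ℕ) (L : ℕ → Option ℕ∞)
    (hSAbij : Set.BijOn SA (Set.Icc 1 (n + 1)) (Set.Icc 1 (n + 1)))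
    (hsorted : ∀ i, 1 ≤ i → i < n + 1 →
      List.Lex (· < ·) (ssp (T.drop (SA i - 1))) (ssp (T.drop (SA (i + 1) - 1))))
    (hL : ∀ i ∈ Set.Icc 1 (n + 1),
      L i = if SA i = 1 then none else some (piEnc (T.drop (SA i - 2))))
    (hLF2 : ∀ i ∈ Set.Icc 1 (n + 1), SA i ≠ 1 →
      LF i ∈ Set.Icc 1 (n + 1) ∧ SA (LF i) = SA i - 1) :
    ∀ i j, 1 ≤ i → i < j → j ≤ n + 1 → L i = L j → L i ≠ none → LF i < LF j := by
  have hmono : StrictMonoOn (fun i => ssp (T.drop (SA i - 1))) (Set.Icc 1 (n + 1)) :=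
    strictMonoOn_of_lt_add_one Set.ordConnected_Icc fun i _ hi hi' => hsorted i hi.1 hi'.2
  intro i j hi hij hj hLij hLi
  have hiI : i ∈ Set.Icc 1 (n + 1) := ⟨hi, by omega⟩
  have hjI : j ∈ Set.Icc 1 (n + 1) := ⟨by omega, hj⟩
  have hSAi : SA i ≠ 1 := fun h => hLi (by rw [hL i hiI, if_pos h])
  have hSAj : SA j ≠ 1 := fun h => hLi (by rw [hLij, hL j hjI, if_pos h])
  have hπ : piEnc (T.drop (SA i - 2)) = piEnc (T.drop (SA j - 2)) := by
    simpa [hL i hiI, hL j hjI, hSAi, hSAj] using hLij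
  obtain ⟨hLFi, hSALFi⟩ := hLF2 i hiI hSAi
  obtain ⟨hLFj, hSALFj⟩ := hLF2 j hjI hSAj
  obtain ⟨hSAi1, hSAin⟩ := hSAbij.mapsTo hiI
  obtain ⟨hSAj1, hSAjn⟩ := hSAbij.mapsTo hjI
  have hlt : List.Lex (· < ·) (ssp (T.drop (SA i - 2 + 1))) (ssp (T.drop (SA j - 2 + 1))) := by
    rw [show SA i - 2 + 1 = SA i - 1 by omega, show SA j - 2 + 1 = SA j - 1 by omega]
    exact (hmono.lt_iff_lt hiI hjI).mpr hij
  refine (hmono.lt_iff_lt hLFi hLFj).mp ?_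
  rw [hSALFi, hSALFj, Nat.sub_sub, Nat.sub_sub]
  exact ssp_drop_lt_ssp_drop (by omega) (by omega) hπ hlt

/-- LF-mapping preserves the relative order of equal non-`$` values of `L_pal`.
Here `L i = none` plays the role of the special symbol `$`. -/
theorem stmt9 {α : Type*} (T : List α) (n : ℕ) (hT : T.length = n)
    (SA LF : ℕ → ℕ) (L : ℕ → Option ℕ∞)
    (hSAbij : Set.BijOn SA (Set.Icc 1 (n + 1)) (Set.Icc 1 (n + 1)))
    (hsorted : ∀ i, 1 ≤ i → i < n + 1 →
      List.Lex (· < ·) (ssp (T.drop (SA i - 1))) (ssp (T.drop (SA (i + 1) - 1))))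
    (hL : ∀ i ∈ Set.Icc 1 (n + 1),
      L i = if SA i = 1 then none else some (piEnc (T.drop (SA i - 2))))
    (hLF1 : ∀ i ∈ Set.Icc 1 (n + 1), SA i = 1 → LF i = 1)
    (hLF2 : ∀ i ∈ Set.Icc 1 (n + 1), SA i ≠ 1 →
      LF i ∈ Set.Icc 1 (n + 1) ∧ SA (LF i) = SA i - 1) :
    ∀ i j, 1 ≤ i → i < j → j ≤ n + 1 → L i = L j → L i ≠ none → LF i < LF j :=
  stmt9_general T n hT SA LF L hSAbij hsorted hL hLF2
end

section
/- For any string v, there is at most one integer p with 2 ≤ p ≤ |v| such that v[1..p] is a palindrome and v[1..p] has no palindromic suffix of length ℓ with 2 ≤ ℓ < p (i.e., at most one nontrivial palindromic prefix of v is its own shortest nontrivial palindromic suffix). -/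
open scoped ENat

variable {α : Type*}

lemma aux10 {α : Type*} (v : List α) (p q : ℕ) (hp2 : 2 ≤ p) (hqv : q ≤ v.length)
    (hpq : p < q) (hppal : IsPal (v.take p)) (hqpal : IsPal (v.take q))
    (hq : ∀ u : List α, u <:+ v.take q → IsPal u → 2 ≤ u.length → ¬ u.length < q) :
    False := by
  have hpref : v.take p <+: v.take q := by
    have : (v.take q).take p = v.take p := by
      rw [List.take_take, min_eq_left hpq.le]
    rw [← this]; exact List.take_prefix _ _
  have hsuf : v.take p <:+ v.take q := by
    have := (List.reverse_suffix.mpr hpref : _)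
    rwa [hppal, hqpal] at this
  have hlen : (v.take p).length = p := List.length_take_of_le (hpq.le.trans hqv)
  exact hq (v.take p) hsuf hppal (by omega) (by omega)

/-- At most one nontrivial palindromic prefix of `v` is its own shortest nontrivial
palindromic suffix. -/
theorem stmt10 {α : Type*} (v : List α) :
    ∀ p q, 2 ≤ p → p ≤ v.length → 2 ≤ q → q ≤ v.length →
      IsPal (v.take p) →
      (∀ u : List α, u <:+ v.take p → IsPal u → 2 ≤ u.length → ¬ u.length < p) →
      IsPal (v.take q) →
      (∀ u : List α, u <:+ v.take q → IsPal u → 2 ≤ u.length → ¬ u.length < q) →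
      p = q := by
  intro p q hp2 hpv hq2 hqv hppal hp hqpal hq
  rcases lt_trichotomy p q with h | h | h
  · exact absurd (aux10 v p q hp2 hqv h hppal hqpal hq) id
  · exact h
  · exact absurd (aux10 v q p hq2 hpv h hqpal hppal hp) id
end

section
/- Let w be a string and 1 ≤ i ≤ |w|. Let lpal_w[i] be the length of the longest palindromic suffix of w[1..i], and when lpal_w[i] > 1, let lpal′_w[i] be the length of the second longest palindromic suffix of w[1..i] (the longest one of length < lpal_w[i]; it exists and is ≥ 1). Then: (1) if lpal_w[i] = 1 then ssp_w[i] = ∞; (2) if lpal_w[i] > 1 and lpal′_w[i] = 1 then ssp_w[i] = lpal_w[i]; (3) if lpal_w[i] > 1 and lpal′_w[i] > 1 then ssp_w[i] = ssp_w[i − lpal_w[i] + lpal′_w[i]]. -/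
open scoped ENat

variable {α : Type*}

/-- `lpalAt w i` : length of the longest palindromic suffix of `w[1..i]`. -/
noncomputable def lpalAt (w : List α) (i : ℕ) : ℕ :=
  sSup {ℓ : ℕ | ∃ u : List α, u <:+ w.take i ∧ IsPal u ∧ u.length = ℓ}

/-- The lpal-encoding of `w`. -/
noncomputable def lpal (w : List α) : List ℕ :=
  (List.range w.length).map fun k => lpalAt w (k + 1)

/-- `lpal'At w i` : length of the second longest palindromic suffix of `w[1..i]`,
i.e. the longest one of length `< lpalAt w i`. -/
noncomputable def lpal'At {α : Type*} (w : List α) (i : ℕ) : ℕ :=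
  sSup {ℓ : ℕ | ∃ u : List α, u <:+ w.take i ∧ IsPal u ∧ u.length = ℓ ∧ ℓ < lpalAt w i}

/-! A palindromic suffix `u'` of a palindrome `u` is also a prefix of `u`. For the longest
palindromic suffix `u` of `w[1..i]` and the second longest one `u'`, this means that `u'` also ends
at position `j = i - lpal_w[i] + lpal'_w[i]`. Then `w[1..i]` and `w[1..j]` have the same suffixes of
length at most `|u'|`, and since `u'` itself is a palindromic suffix of both, their shortest
palindromic suffixes of length `≥ 2` coincide. -/

open List

theorem IsPal.prefix_of_suffix {u v : List α} (hu : IsPal u) (hv : IsPal v) (h : v <:+ u) :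
    v <+: u := by
  have := h.reverse
  rwa [hu, hv] at this

theorem IsPal.suffix_take_of_suffix {s u v : List α} (hus : u <:+ s) (hu : IsPal u) (hv : IsPal v)
    (hvu : v <:+ u) : v <:+ s.take (s.length - u.length + v.length) := by
  obtain ⟨t, rfl⟩ := hus
  have hvt : v = u.take v.length := prefix_iff_eq_take.1 (hu.prefix_of_suffix hv hvu)
  have hlen : (t ++ u).length - u.length + v.length = t.length + v.length := by simp
  rw [hlen, take_append, take_of_length_le (by omega), Nat.add_sub_cancel_left, ← hvt]
  exact suffix_append t v

theorem suffix_iff_of_suffix_of_suffix {u v x y : List α} (hx : u <:+ x) (hy : u <:+ y)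
    (hvu : v.length ≤ u.length) : v <:+ x ↔ v <:+ y :=
  ⟨fun h => (suffix_of_suffix_length_le h hx hvu).trans hy,
    fun h => (suffix_of_suffix_length_le h hy hvu).trans hx⟩

section PalSuffixes

variable {w : List α} {i : ℕ}

theorem bddAbove_palSuffix_lengths (w : List α) (i : ℕ) :
    BddAbove {ℓ : ℕ | ∃ u : List α, u <:+ w.take i ∧ IsPal u ∧ u.length = ℓ} :=
  ⟨(w.take i).length, fun _ ⟨_, hu, _, hℓ⟩ => hℓ ▸ hu.length_le⟩

theorem length_le_lpalAt {v : List α} (hv : v <:+ w.take i) (hvp : IsPal v) :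
    v.length ≤ lpalAt w i :=
  le_csSup (bddAbove_palSuffix_lengths w i) ⟨v, hv, hvp, rfl⟩

theorem exists_lpalAt (w : List α) (i : ℕ) :
    ∃ u : List α, u <:+ w.take i ∧ IsPal u ∧ u.length = lpalAt w i :=
  Nat.sSup_mem (s := {ℓ | ∃ u : List α, u <:+ w.take i ∧ IsPal u ∧ u.length = ℓ})
    ⟨0, [], nil_suffix, rfl, rfl⟩ (bddAbove_palSuffix_lengths w i)

theorem bddAbove_shorter_palSuffix_lengths (w : List α) (i : ℕ) :
    BddAbove {ℓ : ℕ | ∃ u : List α, u <:+ w.take i ∧ IsPal u ∧ u.length = ℓ ∧ ℓ < lpalAt w i} :=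
  (bddAbove_palSuffix_lengths w i).mono fun _ ⟨u, hu, hup, hℓ, _⟩ =>
    Set.mem_ofPred.2 ⟨u, hu, hup, hℓ⟩

theorem length_le_lpal'At {v : List α} (hv : v <:+ w.take i) (hvp : IsPal v)
    (hlt : v.length < lpalAt w i) : v.length ≤ lpal'At w i :=
  le_csSup (bddAbove_shorter_palSuffix_lengths w i) ⟨v, hv, hvp, rfl, hlt⟩

theorem exists_lpal'At (w : List α) (i : ℕ) (h : 0 < lpalAt w i) :
    ∃ u : List α, u <:+ w.take i ∧ IsPal u ∧ u.length = lpal'At w i ∧ lpal'At w i < lpalAt w i :=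
  Nat.sSup_mem (s := {ℓ | ∃ u : List α, u <:+ w.take i ∧ IsPal u ∧ u.length = ℓ ∧ ℓ < lpalAt w i})
    ⟨0, [], nil_suffix, rfl, rfl, h⟩ (bddAbove_shorter_palSuffix_lengths w i)

theorem sspAt_le_s12 {v : List α} (hv : v <:+ w.take i) (hvp : IsPal v) (h2 : 2 ≤ v.length) :
    sspAt w i ≤ v.length :=
  sInf_le ⟨v, hv, hvp, h2, rfl⟩

theorem le_sspAt {n : ℕ∞}
    (h : ∀ v : List α, v <:+ w.take i → IsPal v → 2 ≤ v.length → n ≤ v.length) :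
    n ≤ sspAt w i :=
  le_sInf fun _ ⟨v, hv, hvp, h2, hℓ⟩ => hℓ ▸ h v hv hvp h2

theorem sspAt_le_sspAt_of_palSuffix {j : ℕ} {u : List α} (hi : u <:+ w.take i)
    (hj : u <:+ w.take j) (hu : IsPal u) (h2 : 2 ≤ u.length) : sspAt w i ≤ sspAt w j :=
  le_sspAt fun v hv hvp hv2 => by
    rcases le_or_gt v.length u.length with hvu | huv
    · exact sspAt_le_s12 ((suffix_iff_of_suffix_of_suffix hi hj hvu).2 hv) hvp hv2
    · exact (sspAt_le_s12 hi hu h2).trans (by exact_mod_cast huv.le)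

end PalSuffixes

theorem stmt12_general {α : Type*} (w : List α) (i : ℕ) (hiw : i ≤ w.length) :
    (lpalAt w i = 1 → sspAt w i = ⊤) ∧
    (1 < lpalAt w i → lpal'At w i = 1 → sspAt w i = ((lpalAt w i : ℕ) : ℕ∞)) ∧
    (1 < lpalAt w i → 1 < lpal'At w i →
      sspAt w i = sspAt w (i - lpalAt w i + lpal'At w i)) := by
  obtain ⟨u, hu, hup, huL⟩ := exists_lpalAt w i
  refine ⟨fun hL => ?_, fun hL hL' => ?_, fun hL hL' => ?_⟩
  · exact top_le_iff.1 <| le_sspAt fun v hv hvp h2 => by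
      have := length_le_lpalAt hv hvp
      omega
  · refine le_antisymm (huL ▸ sspAt_le_s12 hu hup (by omega)) (le_sspAt fun v hv hvp h2 => ?_)
    have hlong : lpalAt w i ≤ v.length := by
      by_contra! hlt
      have := length_le_lpal'At hv hvp hlt
      omega
    exact_mod_cast hlong
  · obtain ⟨u', hu', hu'p, hu'L, hlt⟩ := exists_lpal'At w i (by omega)
    have hLi : lpalAt w i ≤ i := huL ▸ hu.length_le.trans (length_take_le i w)
    have hj : u' <:+ w.take (i - lpalAt w i + lpal'At w i) := by
      have := hup.suffix_take_of_suffix hu hu'p (suffix_of_suffix_length_le hu' hu (by omega))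
      rwa [take_take, length_take, min_eq_left hiw, huL, hu'L, min_eq_left (by omega)] at this
    exact le_antisymm (sspAt_le_sspAt_of_palSuffix hu' hj hu'p (by omega))
      (sspAt_le_sspAt_of_palSuffix hj hu' hu'p (by omega))

/-- Recurrence computing `ssp` from `lpal` and the second longest palindromic suffix:
(1) if `lpal_w[i] = 1` then `ssp_w[i] = ∞`;
(2) if `lpal_w[i] > 1` and `lpal'_w[i] = 1` then `ssp_w[i] = lpal_w[i]`;
(3) if `lpal_w[i] > 1` and `lpal'_w[i] > 1` then
`ssp_w[i] = ssp_w[i - lpal_w[i] + lpal'_w[i]]`. -/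
theorem stmt12 {α : Type*} (w : List α) (i : ℕ) (hi : 1 ≤ i) (hiw : i ≤ w.length) :
    (lpalAt w i = 1 → sspAt w i = ⊤) ∧
    (1 < lpalAt w i → lpal'At w i = 1 → sspAt w i = ((lpalAt w i : ℕ) : ℕ∞)) ∧
    (1 < lpalAt w i → 1 < lpal'At w i →
      sspAt w i = sspAt w (i - lpalAt w i + lpal'At w i)) :=
  stmt12_general w i hiw
end

section
/- Let w be a string and let w[i..j] be a maximal palindrome of w with 2 ≤ i ≤ j ≤ |w|. Then w[i..j] is the shortest string among the palindromic suffixes u of w[1..j] (including the empty suffix) that satisfy |u| < j − i + 1 or u = w[i..j], and whose immediately preceding character w[j−|u|] equals w[i−1], if and only if w has no palindromic substring w[i−1..i−2+ℓ] starting at position i−1 with 2 ≤ ℓ ≤ j − i + 2. Equivalently: w[i..j] is the representative (shortest member) of its suffix-pal-group for w[1..j] iff the shortest nontrivial palindromic prefix of w[i−1..|w|] is longer than j − i + 2 or does not exist. -/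
open scoped ENat

variable {α : Type*}

lemma pal_iff_getElem? (r : List α) :
    IsPal r ↔ ∀ k, k < r.length → r[k]? = r[r.length - 1 - k]? := by
  constructor
  · intro h k hk
    conv_lhs => rw [← h]
    rw [List.getElem?_reverse (by simpa using hk)]
  · intro h
    apply List.ext_getElem?
    intro k
    by_cases hk : k < r.length
    · rw [List.getElem?_reverse hk]
      have h2 := h (r.length - 1 - k) (by omega)
      have e : r.length - 1 - (r.length - 1 - k) = k := by omega
      rw [e] at h2
      exact h2
    · rw [List.getElem?_eq_none (by simpa using hk), List.getElem?_eq_none (by omega)]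

lemma pal_seg (w : List α) (s t : ℕ) (ht : t ≤ w.length) :
    IsPal ((w.take t).drop s) ↔ ∀ k, k < t - s → w[s + k]? = w[t - 1 - k]? := by
  have hlen : ((w.take t).drop s).length = t - s := by
    simp [List.length_drop, List.length_take]; omega
  have hget : ∀ k, k < t - s → ((w.take t).drop s)[k]? = w[s + k]? := by
    intro k hk
    rw [List.getElem?_drop, List.getElem?_take, if_pos (by omega)]
  rw [pal_iff_getElem?, hlen]
  constructor
  · intro h k hk
    have h3 := h k hk
    rw [hget k hk, hget (t - s - 1 - k) (by omega)] at h3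
    have e : s + (t - s - 1 - k) = t - 1 - k := by omega
    rw [e] at h3
    exact h3
  · intro h k hk
    rw [hget k hk, hget (t - s - 1 - k) (by omega)]
    have e : s + (t - s - 1 - k) = t - 1 - k := by omega
    rw [e]
    exact h k hk

/-- A maximal palindrome `w[i..j]` (with `i ≥ 2`) is the shortest among the palindromic
suffixes `u` of `w[1..j]` with (`|u| < j-i+1` or `u = w[i..j]`) and
`w[j-|u|] = w[i-1]` (i.e. it is the representative of its suffix-pal-group for `w[1..j]`)
iff `w` has no palindromic substring `w[i-1..i-2+ℓ]` with `2 ≤ ℓ ≤ j-i+2`. -/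
theorem stmt13 {α : Type*} (w : List α) (i j : ℕ)
    (h2i : 2 ≤ i) (hij : i ≤ j) (hj : j ≤ w.length)
    (hpal : IsPal (sub w i j))
    (hmax : w[i - 2]? ≠ w[j]? ∨ j = w.length) :
    ((∀ u : List α, u <:+ w.take j → IsPal u →
        (u.length < j - i + 1 ∨ u = sub w i j) →
        w[j - u.length - 1]? = w[i - 2]? → j - i + 1 ≤ u.length)
      ↔ ¬ ∃ ℓ, 2 ≤ ℓ ∧ ℓ ≤ j - i + 2 ∧ IsPal (sub w (i - 1) (i - 2 + ℓ))) := by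
  have hwj : (w.take j).length = j := by rw [List.length_take]; omega
  have H : ∀ k, k < j - (i-1) → w[(i-1) + k]? = w[j - 1 - k]? := by
    have := (pal_seg w (i-1) j hj).mp hpal
    exact this
  constructor
  · rintro hL ⟨ℓ, h2, hle, hq⟩
    have HQ : ∀ k, k < (i-2+ℓ) - (i-2) → w[(i-2) + k]? = w[(i-2+ℓ) - 1 - k]? := by
      have e : (i - 1) - 1 = i - 2 := by omega
      have := (pal_seg w (i-2) (i-2+ℓ) (by omega)).mp (by rw [← e]; exact hq)
      exact this
    set m := ℓ - 2 with hm
    set u : List α := (w.take j).drop (j - m) with hu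
    have hul : u.length = m := by
      rw [hu, List.length_drop, hwj]; omega
    have h1 : u <:+ w.take j := List.drop_suffix _ _
    have h2p : IsPal u := by
      rw [hu, pal_seg w (j-m) j hj]
      intro k hk
      have hk' : k < m := by omega
      have e1 : j - m + k = j - 1 - (m - 1 - k) := by omega
      have e2 : (i-1) + (m - 1 - k) = (i-2+ℓ) - 1 - (k+1) := by omega
      have e3 : (i-2) + (k+1) = (i-1) + k := by omega
      calc w[j - m + k]? = w[j - 1 - (m - 1 - k)]? := by rw [e1]
        _ = w[(i-1) + (m - 1 - k)]? := (H _ (by omega)).symm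
        _ = w[(i-2+ℓ) - 1 - (k+1)]? := by rw [e2]
        _ = w[(i-2) + (k+1)]? := (HQ _ (by omega)).symm
        _ = w[(i-1) + k]? := by rw [e3]
        _ = w[j - 1 - k]? := H _ (by omega)
    have h4 : w[j - u.length - 1]? = w[i - 2]? := by
      rw [hul]
      have e1 : j - m - 1 = j - 1 - m := by omega
      have e2 : (i-1) + m = (i-2) + (ℓ-1) := by omega
      have e3 : (i-2+ℓ) - 1 - (ℓ-1) = i - 2 := by omega
      calc w[j - m - 1]? = w[j - 1 - m]? := by rw [e1]
        _ = w[(i-1) + m]? := (H m (by omega)).symm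
        _ = w[(i-2) + (ℓ-1)]? := by rw [e2]
        _ = w[(i-2+ℓ) - 1 - (ℓ-1)]? := HQ (ℓ-1) (by omega)
        _ = w[i - 2]? := by rw [e3]
    have := hL u h1 h2p (Or.inl (by omega)) h4
    omega
  · intro hR u hsuf hpalu hor hleft
    by_contra hlen
    push_neg at hlen
    set m := u.length with hm
    have hmle : m ≤ j - i := by omega
    obtain ⟨p, hp⟩ := hsuf
    have hpl : p.length = j - m := by
      have := congrArg List.length hp
      rw [List.length_append, hwj] at this
      omega
    have hueq : u = (w.take j).drop (j - m) := by
      rw [← hp, ← hpl, List.drop_left]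
    have HU : ∀ k, k < m → w[(j-m) + k]? = w[j - 1 - k]? := by
      have := (pal_seg w (j-m) j hj).mp (hueq ▸ hpalu)
      intro k hk; exact this k (by omega)
    apply hR
    refine ⟨m + 2, by omega, by omega, ?_⟩
    have e : (i - 1) - 1 = i - 2 := by omega
    show IsPal ((w.take (i-2+(m+2))).drop ((i-1) - 1))
    rw [e, pal_seg w (i-2) (i-2+(m+2)) (by omega)]
    intro k hk
    have hk2 : k < m + 2 := by omega
    have hleft' : w[j - m - 1]? = w[i - 2]? := hleft
    have hkey : w[i - 2]? = w[(i-1) + m]? := by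
      have e1 : j - m - 1 = j - 1 - m := by omega
      rw [e1] at hleft'
      rw [← hleft']
      exact (H m (by omega)).symm
    rcases Nat.lt_or_ge k 1 with hk0 | hk1
    · have : k = 0 := by omega
      subst this
      have e1 : (i-2) + 0 = i - 2 := by omega
      have e2 : (i-2+(m+2)) - 1 - 0 = (i-1) + m := by omega
      rw [e1, e2]; exact hkey
    rcases Nat.lt_or_ge k (m+1) with hkm | hkm
    · -- 1 ≤ k ≤ m
      have e1 : (i-2) + k = (i-1) + (k-1) := by omega
      have e2 : j - 1 - (k-1) = (j-m) + (m-k) := by omega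
      calc w[(i-2) + k]? = w[(i-1) + (k-1)]? := by rw [e1]
        _ = w[j - 1 - (k-1)]? := H (k-1) (by omega)
        _ = w[(j-m) + (m-k)]? := by rw [e2]
        _ = w[j - 1 - (m-k)]? := HU (m-k) (by omega)
        _ = w[(i-1) + (m-k)]? := (H (m-k) (by omega)).symm
        _ = w[(i-2+(m+2)) - 1 - k]? := by rw [show (i-1) + (m-k) = (i-2+(m+2)) - 1 - k by omega]
    · have : k = m + 1 := by omega
      subst this
      have e1 : (i-2) + (m+1) = (i-1) + m := by omega
      have e2 : (i-2+(m+2)) - 1 - (m+1) = i - 2 := by omega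
      rw [e1, e2]; exact hkey.symm
end

section
/- Let w be a string and 1 ≤ i ≤ |w|. Among all maximal palindromes w[l..r] of w with r ≥ i and l + r ≤ 2i, let w[l*..r*] be the one minimizing the center (l + r)/2 (such a maximal palindrome exists, e.g., the maximal palindrome centered at i). Then the length of the longest palindromic suffix of w[1..i] equals 2i − l* − r* + 1; that is, the longest palindromic suffix of w[1..i] is w[l* + r* − i..i]. -/
/-!
A palindromic suffix `w[i-m+1..i]` of `w[1..i]` has center `(2i-m+1)/2 ≤ i` and extends
outwards to a maximal palindrome with the same center, which is admissible; so minimality of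
the center `(l+r)/2` bounds `m ≤ 2i+1-(l+r)`. Conversely, trimming `r - i` letters from both
ends of `w[l..r]` leaves the palindromic suffix `w[l+r-i..i]`, of exactly that length.
-/

open scoped ENat

variable {α : Type*}

/-- `w[l..r]` is a maximal palindrome of `w`: a palindromic substring that cannot be
extended outwards. -/
def MaxPal {α : Type*} (w : List α) (l r : ℕ) : Prop :=
  1 ≤ l ∧ l ≤ r ∧ r ≤ w.length ∧ IsPal (sub w l r) ∧
    (l = 1 ∨ r = w.length ∨ w[l - 2]? ≠ w[r]?)

theorem IsPal.drop_take {p : List α} (hp : IsPal p) {d : ℕ} (hd : 2 * d ≤ p.length) :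
    IsPal ((p.drop d).take (p.length - 2 * d)) := by
  unfold IsPal at *
  rw [List.reverse_take, List.reverse_drop, hp, List.length_drop,
    show p.length - d - (p.length - 2 * d) = d by omega, List.drop_take]
  congr 1
  omega

theorem IsPal.sub_shrink {w : List α} {l r : ℕ} (hp : IsPal (sub w l r)) (hl : 1 ≤ l)
    (hr : r ≤ w.length) {d : ℕ} (hd : l + 2 * d ≤ r) : IsPal (sub w (l + d) (r - d)) := by
  have h := hp.drop_take (d := d) (by simp only [sub, List.length_drop, List.length_take]; omega)
  simp only [sub, List.drop_take, List.drop_drop, List.take_take, List.length_take,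
    List.length_drop] at h ⊢
  convert h using 2
  · rw [min_eq_left (by omega), min_eq_left (by omega)]
    omega
  · congr 1
    omega

theorem IsPal.sub_extend {w : List α} {l r : ℕ} (hp : IsPal (sub w l r)) (hl : 2 ≤ l)
    (hlr : l ≤ r) (hr : r < w.length) (heq : w[l - 2]? = w[r]?) :
    IsPal (sub w (l - 1) (r + 1)) := by
  rw [List.getElem?_eq_getElem hr] at heq
  obtain ⟨hlt, hc⟩ := List.getElem?_eq_some_iff.mp heq
  have hcons : sub w (l - 1) (r + 1) = w[l - 2] :: (sub w l r ++ [w[r]]) := by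
    have hlen : l - 2 < (w.take r).length := by rw [List.length_take]; omega
    rw [sub, List.take_add_one, List.getElem?_eq_getElem hr, Option.toList_some,
      show l - 1 - 1 = l - 2 by omega, List.drop_append_of_le_length hlen.le,
      List.drop_eq_getElem_cons hlen, show l - 2 + 1 = l - 1 by omega, List.getElem_take]
    rfl
  unfold IsPal at *
  simp [hcons, hp, hc]

theorem exists_maxPal_of_isPal_sub {w : List α} {l r : ℕ} (hl : 1 ≤ l) (hlr : l ≤ r)
    (hr : r ≤ w.length) (hp : IsPal (sub w l r)) :
    ∃ L R, MaxPal w L R ∧ L + R = l + r ∧ r ≤ R := by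
  by_cases hmax : l = 1 ∨ r = w.length ∨ w[l - 2]? ≠ w[r]?
  · exact ⟨l, r, ⟨hl, hlr, hr, hp, hmax⟩, rfl, le_rfl⟩
  · push Not at hmax
    obtain ⟨hl1, hrw, heq⟩ := hmax
    obtain ⟨L, R, hLR, hsum, hR⟩ := exists_maxPal_of_isPal_sub (l := l - 1) (r := r + 1)
      (by omega) (by omega) (by omega) (hp.sub_extend (by omega) hlr (by omega) heq)
    exact ⟨L, R, hLR, by omega, by omega⟩
termination_by l

theorem sub_eq_drop_take (w : List α) (l i : ℕ) : sub w l i = (w.take i).drop (l - 1) := rfl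

theorem eq_sub_of_suffix_take {w u : List α} {i : ℕ} (hu : u <:+ w.take i)
    (hi : i ≤ w.length) : u = sub w (i - u.length + 1) i := by
  have hlen := hu.length_le
  rw [List.length_take_of_le hi] at hlen
  rw [List.suffix_iff_eq_drop.mp hu, sub_eq_drop_take, List.length_take_of_le hi,
    List.length_drop, List.length_take_of_le hi]
  congr 1
  omega

theorem exists_maxPal_of_isPal_suffix_take {w u : List α} {i : ℕ} (hu : u <:+ w.take i)
    (hi : i ≤ w.length) (hup : IsPal u) (hpos : 0 < u.length) :
    ∃ L R, MaxPal w L R ∧ L + R = 2 * i + 1 - u.length ∧ i ≤ R := by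
  have hle : u.length ≤ i := List.length_take_of_le hi ▸ hu.length_le
  rw [eq_sub_of_suffix_take hu hi] at hup
  obtain ⟨L, R, hLR, hsum, hR⟩ := exists_maxPal_of_isPal_sub (by omega) (by omega) hi hup
  exact ⟨L, R, hLR, by omega, hR⟩

theorem stmt14_general {α : Type*} (w : List α) (i : ℕ) (hiw : i ≤ w.length)
    (l r : ℕ) (hmp : MaxPal w l r) (hri : i ≤ r) (hlr : l + r ≤ 2 * i)
    (hmin : ∀ l' r', MaxPal w l' r' → i ≤ r' → l' + r' ≤ 2 * i → l + r ≤ l' + r') :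
    lpalAt w i = 2 * i + 1 - (l + r) ∧
    (w.take i).drop ((w.take i).length - lpalAt w i) = sub w (l + r - i) i := by
  obtain ⟨hl, -, hrw, hpal, -⟩ := hmp
  have hlen : (w.take i).length = i := List.length_take_of_le hiw
  have hsuffix : sub w (l + r - i) i <:+ w.take i := List.drop_suffix _ _
  have hsuffix_len : (sub w (l + r - i) i).length = 2 * i + 1 - (l + r) := by
    rw [sub_eq_drop_take, List.length_drop, hlen]; omega
  have hsuffix_pal : IsPal (sub w (l + r - i) i) := by
    have h := hpal.sub_shrink hl hrw (d := r - i) (by omega)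
    rwa [show l + (r - i) = l + r - i by omega, show r - (r - i) = i by omega] at h
  have hbound : ∀ u : List α, u <:+ w.take i → IsPal u → u.length ≤ 2 * i + 1 - (l + r) := by
    intro u hu hupal
    rcases u.length.eq_zero_or_pos with h0 | hpos
    · omega
    obtain ⟨L, R, hLR, hsum, hR⟩ := exists_maxPal_of_isPal_suffix_take hu hiw hupal hpos
    have := hmin L R hLR hR (by omega)
    omega
  have hlpal : lpalAt w i = 2 * i + 1 - (l + r) :=
    IsGreatest.csSup_eq ⟨⟨_, hsuffix, hsuffix_pal, hsuffix_len⟩,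
      fun _ ⟨u, hu, hupal, hul⟩ => hul ▸ hbound u hu hupal⟩
  refine ⟨hlpal, ?_⟩
  rw [hlpal, hlen, sub_eq_drop_take]
  congr 1
  omega

/-- Among all maximal palindromes `w[l..r]` with `r ≥ i` and `l + r ≤ 2i`, the one with
the smallest center gives the longest palindromic suffix of `w[1..i]`: it has length
`2i - l - r + 1` and equals `w[l+r-i..i]`. -/
theorem stmt14 {α : Type*} (w : List α) (i : ℕ) (hi : 1 ≤ i) (hiw : i ≤ w.length)
    (l r : ℕ) (hmp : MaxPal w l r) (hri : i ≤ r) (hlr : l + r ≤ 2 * i)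
    (hmin : ∀ l' r', MaxPal w l' r' → i ≤ r' → l' + r' ≤ 2 * i → l + r ≤ l' + r') :
    lpalAt w i = 2 * i + 1 - (l + r) ∧
    (w.take i).drop ((w.take i).length - lpalAt w i) = sub w (l + r - i) i :=
  stmt14_general w i hiw l r hmp hri hlr hmin
end
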